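/- arXiv:1707.02598 — 5 statements merged into one kernel-verified Lean document; each statement's English description precedes it below -/
import Mathlib

section
/- In a quitting game, if there is a normal player i ∈ I_* such that the vector r^i has all coordinates nonnegative (r^i ∈ ℝ^N_{≥0}), then for every ε > 0 the game admits a stationary ε-equilibrium. -/
noncomputable section

/-- The probability that, under the behavior strategy profile `x`, the game terminates at
stage `t` (0-indexed) with quitting set `S`. -/
def termProb {N : ℕ} (x : Fin N → ℕ → ℝ) (t : ℕ) (S : Finset (Fin N)) : ℝ :=
  (∏ u ∈ Finset.range t, ∏ i : Fin N, (1 - x i u)) *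
    ((∏ i ∈ S, x i t) * ∏ i ∈ Sᶜ, (1 - x i t))

/-- The collection of nonempty subsets of players. -/
def nonempties (N : ℕ) : Finset (Finset (Fin N)) :=
  Finset.univ.filter fun S => S ≠ ∅

/-- The expected payoff of player `i` under the behavior strategy profile `x` in the
quitting game with payoffs `r`. -/
def payoff {N : ℕ} (r : Finset (Fin N) → Fin N → ℝ) (x : Fin N → ℕ → ℝ) (i : Fin N) : ℝ :=
  (∑' t : ℕ, ∑ S ∈ nonempties N, termProb x t S * r S i) +
    (1 - ∑' t : ℕ, ∑ S ∈ nonempties N, termProb x t S) * r ∅ i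

/-- `x` is an `ε`-equilibrium: it is a valid profile and no player can gain more than `ε`
by a unilateral deviation to any valid behavior strategy. -/
def IsEpsEquilibrium {N : ℕ} (r : Finset (Fin N) → Fin N → ℝ)
    (x : Fin N → ℕ → ℝ) (ε : ℝ) : Prop :=
  (∀ i t, x i t ∈ Set.Icc (0 : ℝ) 1) ∧
    ∀ (i : Fin N) (x' : ℕ → ℝ), (∀ t, x' t ∈ Set.Icc (0 : ℝ) 1) →
      payoff r x i ≥ payoff r (Function.update x i x') i - ε

/-- The decreasing sequence of sets of players `I_0 ⊇ I_1 ⊇ ⋯`: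
`I_0 = I` and `I_{l+1} = {i ∈ I_l : ∃ j ∈ I_l, j ≠ i, r^j_i ≤ 0}`. -/
def normalLevel {N : ℕ} (r : Finset (Fin N) → Fin N → ℝ) : ℕ → Set (Fin N)
  | 0 => Set.univ
  | l + 1 => {i | i ∈ normalLevel r l ∧ ∃ j ∈ normalLevel r l, j ≠ i ∧ r {j} i ≤ 0}

/-- The set `I_* = ∩_l I_l` of normal players. -/
def normalPlayers {N : ℕ} (r : Finset (Fin N) → Fin N → ℝ) : Set (Fin N) :=
  ⋂ l, normalLevel r l

/-- A solution `(w,z)` of the linear complementarity problem `LCP((r^i)_{i=1}^n, q)`,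
where `r i` is the vector `r^i`: `w ∈ ℝ^n_{≥0}`, `z ∈ Δ({0,1,…,n})`,
`w = z_0 q + ∑_i z_i r^i`, and `z_i = 0` or `w_i = 0` for every `i ∈ [n]`. -/
def IsLCPSolution (n : ℕ) (r : Fin n → Fin n → ℝ) (q w : Fin n → ℝ)
    (z : Fin (n + 1) → ℝ) : Prop :=
  (∀ i, 0 ≤ w i) ∧ (∀ i, 0 ≤ z i) ∧ (∑ i, z i = 1) ∧
    (∀ j, w j = z 0 * q j + ∑ i : Fin n, z i.succ * r i j) ∧
    (∀ i : Fin n, z i.succ = 0 ∨ w i = 0)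

/-- The matrix with columns `r^1,…,r^n` is a `Q`-matrix if `LCP((r^i), q)` has a solution
for every `q ∈ ℝ^n`. -/
def IsQMatrix (n : ℕ) (r : Fin n → Fin n → ℝ) : Prop :=
  ∀ q : Fin n → ℝ, ∃ (w : Fin n → ℝ) (z : Fin (n + 1) → ℝ), IsLCPSolution n r q w z

/-!
Since `i ∈ I_1`, some `j ≠ i` has `r^j_i ≤ 0`. Let `i` quit at every stage with probability `π`,
`j` with probability `π²`, and nobody else. A player `m` facing stationary opponents, who quit at
each stage with probability `σ > 0`, gets at most `max(β, 0)/σ + σ`, where `β` is `m`'s expected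
payoff from a stage in which only the others quit: the stages in which `m` waits are worth at most
`β` each and number `1/σ` in expectation, while quitting yields `r^m_m = 0` unless someone else
quits at the same stage, which happens with probability `σ`. The stationary payoff is the ratio
of the expected stage payoff to the stage quitting probability `≈ π`. So `i`, punished by `j`,
gains at most `π + π²`; `j`, who waits for `i`, already gets about `r^i_j`; and a bystander loses
at most `π²` per stage relative to waiting, since `r^i ≥ 0`.
-/

namespace QuittingGame

open Finset Filter Topology Function

variable {N : ℕ}

def stageProb (b : Fin N → ℝ) (S : Finset (Fin N)) : ℝ :=
  (∏ k ∈ S, b k) * ∏ k ∈ Sᶜ, (1 - b k)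

/-- The expected value of `F` over the quitting set of a stage that ends the game, when each player
`k` quits independently with probability `b k`; it is not normalized, and `stageExpectation b 1` is
the probability that the stage ends the game. -/
def stageExpectation (b : Fin N → ℝ) (F : Finset (Fin N) → ℝ) : ℝ :=
  ∑ S ∈ nonempties N, stageProb b S * F S

lemma update_mem_Icc {b : Fin N → ℝ} (hb : ∀ k, b k ∈ Set.Icc (0 : ℝ) 1) (m : Fin N)
    {c : ℝ} (hc : c ∈ Set.Icc (0 : ℝ) 1) : ∀ k, update b m c k ∈ Set.Icc (0 : ℝ) 1 :=
  forall_update_iff b (p := fun _ y => y ∈ Set.Icc (0 : ℝ) 1) |>.2 ⟨hc, fun k _ => hb k⟩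

lemma stageProb_nonneg {b : Fin N → ℝ} (hb : ∀ k, b k ∈ Set.Icc (0 : ℝ) 1)
    (S : Finset (Fin N)) : 0 ≤ stageProb b S :=
  mul_nonneg (prod_nonneg fun k _ => (hb k).1) (prod_nonneg fun k _ => sub_nonneg.2 (hb k).2)

lemma sum_stageProb (b : Fin N → ℝ) : ∑ S, stageProb b S = 1 := by
  have h := prod_add b (fun k => 1 - b k) univ
  simp only [add_sub_cancel, prod_const_one, powerset_univ, ← compl_eq_univ_sdiff] at h
  exact h.symm

lemma stageExpectation_one (b : Fin N → ℝ) :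
    stageExpectation b 1 = 1 - ∏ k, (1 - b k) := by
  have hsplit := sum_erase_add univ (stageProb b) (mem_univ ∅)
  rw [sum_stageProb] at hsplit
  simp only [stageExpectation, Pi.one_apply, mul_one, nonempties, filter_ne' univ ∅]
  simp only [stageProb, prod_empty, compl_empty, one_mul] at hsplit ⊢
  linarith

lemma stageExpectation_mono {b : Fin N → ℝ} (hb : ∀ k, b k ∈ Set.Icc (0 : ℝ) 1)
    {F G : Finset (Fin N) → ℝ} (hFG : ∀ S, F S ≤ G S) :
    stageExpectation b F ≤ stageExpectation b G :=
  sum_le_sum fun S _ => mul_le_mul_of_nonneg_left (hFG S) (stageProb_nonneg hb S)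

lemma stageExpectation_one_nonneg {b : Fin N → ℝ} (hb : ∀ k, b k ∈ Set.Icc (0 : ℝ) 1) :
    0 ≤ stageExpectation b 1 := by
  simpa [stageExpectation] using stageExpectation_mono hb (F := 0) (G := 1) fun _ => zero_le_one

lemma stageExpectation_one_le_one {b : Fin N → ℝ} (hb : ∀ k, b k ∈ Set.Icc (0 : ℝ) 1) :
    stageExpectation b 1 ≤ 1 := by
  rw [stageExpectation_one]
  linarith [prod_nonneg fun k (_ : k ∈ univ) => sub_nonneg.2 (hb k).2]

lemma abs_stageExpectation_le {b : Fin N → ℝ} (hb : ∀ k, b k ∈ Set.Icc (0 : ℝ) 1)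
    {F : Finset (Fin N) → ℝ} (hF : ∀ S, F S ∈ Set.Icc (-1 : ℝ) 1) :
    |stageExpectation b F| ≤ stageExpectation b 1 := by
  have hneg : stageExpectation b (fun _ => -1) = -stageExpectation b 1 := by
    simp [stageExpectation]
  refine abs_le.2 ⟨?_, stageExpectation_mono hb fun S => (hF S).2⟩
  rw [← hneg]
  exact stageExpectation_mono hb fun S => (hF S).1

lemma one_sub_update (b : Fin N → ℝ) (m : Fin N) (c : ℝ) :
    (fun k => 1 - update b m c k) = update (fun k => 1 - b k) m (1 - c) := by
  ext k; by_cases h : k = m <;> simp [h]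

lemma stageProb_eq_affine (b : Fin N → ℝ) (m : Fin N) (S : Finset (Fin N)) :
    stageProb b S = (1 - b m) * stageProb (update b m 0) S + b m * stageProb (update b m 1) S := by
  have hcompl := one_sub_update b m
  by_cases hm : m ∈ S
  · have hmc : m ∉ Sᶜ := notMem_compl.2 hm
    simp only [stageProb, prod_update_of_mem hm, hcompl, prod_update_of_notMem hmc]
    rw [← mul_prod_erase S b hm, sdiff_singleton_eq_erase]
    ring
  · have hmc : m ∈ Sᶜ := mem_compl.2 hm
    simp only [stageProb, prod_update_of_notMem hm, hcompl, prod_update_of_mem hmc]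
    rw [← mul_prod_erase Sᶜ (fun k => 1 - b k) hmc, sdiff_singleton_eq_erase]
    ring

lemma stageExpectation_eq_affine (b : Fin N → ℝ) (m : Fin N) (F : Finset (Fin N) → ℝ) :
    stageExpectation b F = (1 - b m) * stageExpectation (update b m 0) F
      + b m * stageExpectation (update b m 1) F := by
  simp only [stageExpectation, mul_sum, ← sum_add_distrib]
  exact sum_congr rfl fun S _ => by rw [stageProb_eq_affine b m S]; ring

lemma prod_one_sub_update (b : Fin N → ℝ) (m : Fin N) (c : ℝ) :
    ∏ k, (1 - update b m c k) = (1 - c) * ∏ k ∈ {m}ᶜ, (1 - b k) := by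
  rw [one_sub_update, prod_update_of_mem (mem_univ m), compl_eq_univ_sdiff]

lemma stageExpectation_update_one_one (b : Fin N → ℝ) (m : Fin N) :
    stageExpectation (update b m 1) 1 = 1 := by
  rw [stageExpectation_one, prod_one_sub_update, sub_self, zero_mul, sub_zero]

lemma stageExpectation_update_one_le (r : Finset (Fin N) → Fin N → ℝ) {m : Fin N}
    (hr : ∀ S, r S m ≤ 1) (hdiag : r {m} m = 0)
    {b : Fin N → ℝ} (hb : ∀ k, b k ∈ Set.Icc (0 : ℝ) 1) :
    stageExpectation (update b m 1) (fun S => r S m) ≤ stageExpectation (update b m 0) 1 := by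
  have hb1 := update_mem_Icc hb m (c := 1) ⟨zero_le_one, le_rfl⟩
  have hle : ∀ S, r S m ≤ 1 - if S = {m} then 1 else 0 := fun S => by
    split_ifs with h
    · rw [h, hdiag, sub_self]
    · rw [sub_zero]; exact hr S
  refine (stageExpectation_mono hb1 hle).trans_eq ?_
  have hsingle : ({m} : Finset (Fin N)) ∈ nonempties N := by simp [nonempties]
  have h1 := stageExpectation_update_one_one b m
  rw [stageExpectation_one (update b m 0), prod_one_sub_update]
  simp only [stageExpectation, Pi.one_apply, mul_one] at h1 ⊢
  simp only [mul_sub, mul_one, sum_sub_distrib, mul_ite, mul_zero, sum_ite_eq', if_pos hsingle]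
  rw [h1, stageProb, prod_singleton, update_self, one_mul, sub_zero, one_mul]
  refine congrArg _ (prod_congr rfl fun k hk => ?_)
  rw [update_of_ne (by simpa using hk)]

def survivalProb (x : Fin N → ℕ → ℝ) (t : ℕ) : ℝ := ∏ u ∈ range t, ∏ k, (1 - x k u)

section Profile

variable {x : Fin N → ℕ → ℝ}

lemma survivalProb_succ (x : Fin N → ℕ → ℝ) (t : ℕ) :
    survivalProb x (t + 1) = survivalProb x t * ∏ k, (1 - x k t) :=
  prod_range_succ _ _

lemma survivalProb_nonneg (hx : ∀ k t, x k t ∈ Set.Icc (0 : ℝ) 1) (t : ℕ) :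
    0 ≤ survivalProb x t :=
  prod_nonneg fun u _ => prod_nonneg fun k _ => sub_nonneg.2 (hx k u).2

lemma sum_termProb_mul (x : Fin N → ℕ → ℝ) (t : ℕ) (F : Finset (Fin N) → ℝ) :
    ∑ S ∈ nonempties N, termProb x t S * F S
      = survivalProb x t * stageExpectation (fun k => x k t) F := by
  rw [stageExpectation, mul_sum]
  exact sum_congr rfl fun S _ => mul_assoc _ _ _

lemma sum_termProb (x : Fin N → ℕ → ℝ) (t : ℕ) :
    ∑ S ∈ nonempties N, termProb x t S
      = survivalProb x t * stageExpectation (fun k => x k t) 1 := by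
  simpa using sum_termProb_mul x t 1

lemma survivalProb_mul_stageExpectation_one (x : Fin N → ℕ → ℝ) (t : ℕ) :
    survivalProb x t * stageExpectation (fun k => x k t) 1
      = survivalProb x t - survivalProb x (t + 1) := by
  rw [stageExpectation_one, survivalProb_succ]
  ring

lemma tendsto_survivalProb_zero (hx : ∀ k t, x k t ∈ Set.Icc (0 : ℝ) 1) {σ : ℝ} (hσ : 0 < σ)
    (hquit : ∀ t, σ ≤ stageExpectation (fun k => x k t) 1) :
    Tendsto (survivalProb x) atTop (𝓝 0) := by
  have hσ1 : σ ≤ 1 := (hquit 0).trans (stageExpectation_one_le_one fun k => hx k 0)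
  have hbound : ∀ t, survivalProb x t ≤ (1 - σ) ^ t := by
    intro t
    induction t with
    | zero => simp [survivalProb]
    | succ t ih =>
      have hstage : ∏ k, (1 - x k t) ≤ 1 - σ := by
        linarith [hquit t, stageExpectation_one fun k => x k t]
      rw [survivalProb_succ, pow_succ]
      exact mul_le_mul ih hstage (prod_nonneg fun k _ => sub_nonneg.2 (hx k t).2)
        (pow_nonneg (by linarith) t)
  exact squeeze_zero (survivalProb_nonneg hx) hbound
    (tendsto_pow_atTop_nhds_zero_of_lt_one (by linarith) (by linarith))

lemma hasSum_survivalProb_mul_stageExpectation_one (hx : ∀ k t, x k t ∈ Set.Icc (0 : ℝ) 1)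
    (hQ : Tendsto (survivalProb x) atTop (𝓝 0)) :
    HasSum (fun t => survivalProb x t * stageExpectation (fun k => x k t) 1) 1 := by
  have hnonneg : ∀ t, 0 ≤ survivalProb x t * stageExpectation (fun k => x k t) 1 := fun t =>
    mul_nonneg (survivalProb_nonneg hx t) (stageExpectation_one_nonneg fun k => hx k t)
  rw [hasSum_iff_tendsto_nat_of_nonneg hnonneg]
  simp only [survivalProb_mul_stageExpectation_one, sum_range_sub']
  simpa [survivalProb] using hQ.const_sub 1

lemma hasSum_payoff (r : Finset (Fin N) → Fin N → ℝ) {m : Fin N}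
    (hr : ∀ S, r S m ∈ Set.Icc (-1 : ℝ) 1) (hx : ∀ k t, x k t ∈ Set.Icc (0 : ℝ) 1)
    (hQ : Tendsto (survivalProb x) atTop (𝓝 0)) :
    HasSum (fun t => survivalProb x t * stageExpectation (fun k => x k t) fun S => r S m)
      (payoff r x m) := by
  have hquit := hasSum_survivalProb_mul_stageExpectation_one hx hQ
  have hsummable : Summable fun t =>
      survivalProb x t * stageExpectation (fun k => x k t) fun S => r S m := by
    refine hquit.summable.of_norm_bounded fun t => ?_
    rw [Real.norm_eq_abs, abs_mul, abs_of_nonneg (survivalProb_nonneg hx t)]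
    exact mul_le_mul_of_nonneg_left (abs_stageExpectation_le (fun k => hx k t) hr)
      (survivalProb_nonneg hx t)
  have hpayoff : payoff r x m
      = ∑' t, survivalProb x t * stageExpectation (fun k => x k t) fun S => r S m := by
    simp only [payoff, sum_termProb_mul, sum_termProb, hquit.tsum_eq, sub_self, zero_mul,
      add_zero]
  exact hpayoff ▸ hsummable.hasSum

lemma payoff_le_of_stageExpectation_le (r : Finset (Fin N) → Fin N → ℝ) {m : Fin N}
    (hr : ∀ S, r S m ∈ Set.Icc (-1 : ℝ) 1) (hx : ∀ k t, x k t ∈ Set.Icc (0 : ℝ) 1)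
    (hQ : Tendsto (survivalProb x) atTop (𝓝 0)) {C : ℝ}
    (hC : ∀ t, stageExpectation (fun k => x k t) (fun S => r S m)
      ≤ C * stageExpectation (fun k => x k t) 1) :
    payoff r x m ≤ C := by
  have h := (hasSum_survivalProb_mul_stageExpectation_one hx hQ).mul_left C
  rw [mul_one] at h
  refine hasSum_le (fun t => ?_) (hasSum_payoff r hr hx hQ) h
  rw [mul_left_comm]
  exact mul_le_mul_of_nonneg_left (hC t) (survivalProb_nonneg hx t)

end Profile

section Stationary

variable (r : Finset (Fin N) → Fin N → ℝ) {m : Fin N} {a : Fin N → ℝ}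

lemma payoff_stationary (hr : ∀ S, r S m ∈ Set.Icc (-1 : ℝ) 1)
    (ha : ∀ k, a k ∈ Set.Icc (0 : ℝ) 1) (hquit : 0 < stageExpectation a 1) :
    payoff r (fun k _ => a k) m = stageExpectation a (fun S => r S m) / stageExpectation a 1 := by
  have hx : ∀ k (_ : ℕ), a k ∈ Set.Icc (0 : ℝ) 1 := fun k _ => ha k
  have hsurv : ∀ t, survivalProb (fun k _ => a k) t = (1 - stageExpectation a 1) ^ t := fun t => by
    rw [survivalProb, prod_const, card_range, stageExpectation_one, sub_sub_cancel]
  have hQ := tendsto_survivalProb_zero hx hquit fun _ => le_rfl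
  have hgeom := (hasSum_geometric_of_lt_one (sub_nonneg.2 (stageExpectation_one_le_one ha))
    (sub_lt_self 1 hquit)).mul_right (stageExpectation a fun S => r S m)
  simp only [← hsurv, sub_sub_cancel] at hgeom
  rw [(hasSum_payoff r hr hx hQ).unique hgeom, inv_mul_eq_div]

lemma payoff_update_le (hr : ∀ S, r S m ∈ Set.Icc (-1 : ℝ) 1) (hdiag : r {m} m = 0)
    (ha : ∀ k, a k ∈ Set.Icc (0 : ℝ) 1) {s : ℕ → ℝ} (hs : ∀ t, s t ∈ Set.Icc (0 : ℝ) 1)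
    (hσ : 0 < stageExpectation (update a m 0) 1) :
    payoff r (update (fun k _ => a k) m s) m
      ≤ max (stageExpectation (update a m 0) fun S => r S m) 0
          / stageExpectation (update a m 0) 1 + stageExpectation (update a m 0) 1 := by
  set σ := stageExpectation (update a m 0) 1
  set β := stageExpectation (update a m 0) fun S => r S m
  have hstage : ∀ t, (fun k => update (fun k _ => a k) m s k t) = update a m (s t) := fun t => by
    ext k; by_cases h : k = m <;> simp [h]
  have hx : ∀ k t, update (fun k _ => a k) m s k t ∈ Set.Icc (0 : ℝ) 1 := fun k t => by
    by_cases h : k = m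
    · subst h; simpa using hs t
    · simpa [h] using ha k
  have hquit : ∀ t, stageExpectation (update a m (s t)) 1 = (1 - s t) * σ + s t := fun t => by
    rw [stageExpectation_eq_affine _ m, update_idem, update_idem, update_self,
      stageExpectation_update_one_one, mul_one]
  have hpay : ∀ t, stageExpectation (update a m (s t)) (fun S => r S m)
      ≤ (1 - s t) * β + s t * σ := fun t => by
    rw [stageExpectation_eq_affine _ m, update_idem, update_idem, update_self]
    gcongr
    · exact (hs t).1
    · exact stageExpectation_update_one_le r (fun S => (hr S).2) hdiag ha
  have hσ1 : σ ≤ 1 := stageExpectation_one_le_one (update_mem_Icc ha m ⟨le_rfl, zero_le_one⟩)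
  have hQ := tendsto_survivalProb_zero hx hσ fun t => by
    rw [hstage, hquit]
    nlinarith [(hs t).1, (hs t).2, hσ]
  refine payoff_le_of_stageExpectation_le r hr hx hQ fun t => ?_
  rw [hstage, hquit]
  refine (hpay t).trans ?_
  have hst := hs t
  have hβ : β ≤ max β 0 := le_max_left β 0
  have hM : 0 ≤ max β 0 / σ := div_nonneg (le_max_right β 0) hσ.le
  have hexpand : (max β 0 / σ + σ) * ((1 - s t) * σ + s t)
      = (1 - s t) * max β 0 + s t * σ + (s t * (max β 0 / σ) + (1 - s t) * σ ^ 2) := by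
    field_simp
    ring
  rw [hexpand]
  nlinarith [hst.1, hst.2, mul_nonneg hst.1 hM, sq_nonneg σ]

end Stationary

def pairRates (i j : Fin N) (p q : ℝ) : Fin N → ℝ :=
  fun k => if k = i then p else if k = j then q else 0

section PairRates

variable {i j : Fin N} {p q : ℝ}

lemma eq_pair_of_forall_mem {S : Finset (Fin N)} (hS : S.Nonempty)
    (h : ∀ k ∈ S, k = i ∨ k = j) : S = {i} ∨ S = {j} ∨ S = {i, j} := by
  obtain ⟨l, hl⟩ := hS
  simp only [Finset.ext_iff, mem_singleton, mem_insert]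
  grind

lemma stageProb_eq_prod_ite (b : Fin N → ℝ) (S : Finset (Fin N)) :
    stageProb b S = ∏ k, if k ∈ S then b k else 1 - b k := by
  rw [← prod_mul_prod_compl S (fun k => if k ∈ S then b k else 1 - b k), stageProb]
  congr 1 <;> refine prod_congr rfl fun k hk => ?_
  · rw [if_pos hk]
  · rw [if_neg (mem_compl.1 hk)]

lemma stageProb_pairRates (hij : i ≠ j) {S : Finset (Fin N)} (hS : ∀ k ∈ S, k = i ∨ k = j) :
    stageProb (pairRates i j p q) S
      = (if i ∈ S then p else 1 - p) * (if j ∈ S then q else 1 - q) := by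
  rw [stageProb_eq_prod_ite, prod_eq_mul i j hij (fun k _ hk => ?_) (by simp) (by simp)]
  · simp [pairRates, hij.symm]
  · have hkS : k ∉ S := fun h => (hS k h).elim hk.1 hk.2
    simp [pairRates, hk.1, hk.2, hkS]

lemma stageProb_pairRates_eq_zero {S : Finset (Fin N)} {k : Fin N} (hk : k ∈ S) (hki : k ≠ i)
    (hkj : k ≠ j) : stageProb (pairRates i j p q) S = 0 := by
  rw [stageProb, prod_eq_zero hk (by simp [pairRates, hki, hkj]), zero_mul]

lemma stageExpectation_pairRates (hij : i ≠ j) (F : Finset (Fin N) → ℝ) :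
    stageExpectation (pairRates i j p q) F
      = p * (1 - q) * F {i} + (1 - p) * q * F {j} + p * q * F {i, j} := by
  have hT : ({{i}, {j}, {i, j}} : Finset (Finset (Fin N))) ⊆ nonempties N := by
    simp [insert_subset_iff, nonempties]
  rw [stageExpectation, ← sum_subset hT fun S hS hST => ?_]
  · have h1 : ({i} : Finset (Fin N)) ∉ ({{j}, {i, j}} : Finset (Finset (Fin N))) := by
      simp [hij, hij.symm, Finset.ext_iff]
    have h2 : ({j} : Finset (Fin N)) ∉ ({{i, j}} : Finset (Finset (Fin N))) := by
      simp [hij, Finset.ext_iff]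
    rw [sum_insert h1, sum_insert h2, sum_singleton, stageProb_pairRates hij (by simp),
      stageProb_pairRates hij (by simp), stageProb_pairRates hij (by simp)]
    simp [hij, hij.symm]
    ring
  · have hSne : S.Nonempty := nonempty_iff_ne_empty.2 (by simpa [nonempties] using hS)
    by_cases hpair : ∀ k ∈ S, k = i ∨ k = j
    · exact absurd (by simpa using eq_pair_of_forall_mem hSne hpair) hST
    · obtain ⟨k, hk, hki, hkj⟩ : ∃ k ∈ S, k ≠ i ∧ k ≠ j := by simpa [not_or] using hpair
      rw [stageProb_pairRates_eq_zero hk hki hkj, zero_mul]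

lemma pairRates_mem_Icc (hp : p ∈ Set.Icc (0 : ℝ) 1) (hq : q ∈ Set.Icc (0 : ℝ) 1) (k : Fin N) :
    pairRates i j p q k ∈ Set.Icc (0 : ℝ) 1 := by
  unfold pairRates
  split_ifs
  exacts [hp, hq, ⟨le_rfl, zero_le_one⟩]

lemma stageExpectation_pairRates_one (hij : i ≠ j) :
    stageExpectation (pairRates i j p q) 1 = p + q - p * q := by
  rw [stageExpectation_pairRates hij]
  simp only [Pi.one_apply]
  ring

lemma update_pairRates_left : update (pairRates i j p q) i 0 = pairRates i j 0 q := by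
  ext k; by_cases hk : k = i <;> simp [pairRates, hk]

lemma update_pairRates_right (hij : i ≠ j) :
    update (pairRates i j p q) j 0 = pairRates i j p 0 := by
  ext k; by_cases hk : k = j <;> simp [pairRates, hk, hij.symm]

lemma update_pairRates_of_ne {m : Fin N} (hmi : m ≠ i) (hmj : m ≠ j) :
    update (pairRates i j p q) m 0 = pairRates i j p q :=
  update_eq_self_iff.2 (by simp [pairRates, hmi, hmj])

end PairRates

section Equilibrium

variable (r : Finset (Fin N) → Fin N → ℝ) {i j : Fin N} {π : ℝ} {s : ℕ → ℝ}

lemma mem_Icc_and_sq_mem_Icc (hπ0 : 0 < π) (hπ : π ≤ 1 / 3) :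
    π ∈ Set.Icc (0 : ℝ) 1 ∧ π ^ 2 ∈ Set.Icc (0 : ℝ) 1 :=
  ⟨⟨hπ0.le, by linarith⟩, ⟨sq_nonneg π, by nlinarith⟩⟩

lemma stageExpectation_pairRates_sq_one (hij : i ≠ j) :
    stageExpectation (pairRates i j π (π ^ 2)) 1 = π + π ^ 2 - π ^ 3 := by
  rw [stageExpectation_pairRates_one hij]
  ring

lemma stageExpectation_pairRates_ge {p q : ℝ} (hij : i ≠ j) (hp : p ∈ Set.Icc (0 : ℝ) 1)
    (hq : q ∈ Set.Icc (0 : ℝ) 1) {F : Finset (Fin N) → ℝ} (hF : ∀ S, -1 ≤ F S) :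
    p * (1 - q) * F {i} - q ≤ stageExpectation (pairRates i j p q) F := by
  rw [stageExpectation_pairRates hij]
  nlinarith [mul_nonneg (mul_nonneg (sub_nonneg.2 hp.2) hq.1) (neg_le_iff_add_nonneg.1 (hF {j})),
    mul_nonneg (mul_nonneg hp.1 hq.1) (neg_le_iff_add_nonneg.1 (hF {i, j}))]

lemma payoff_update_pairRates_left_le (hr : ∀ S k, r S k ∈ Set.Icc (-1 : ℝ) 1)
    (hdiag : ∀ k, r {k} k = 0) (hij : i ≠ j) (hrji : r {j} i ≤ 0) (hπ0 : 0 < π)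
    (hπ : π ≤ 1 / 3) (hs : ∀ t, s t ∈ Set.Icc (0 : ℝ) 1) :
    payoff r (update (fun k _ => pairRates i j π (π ^ 2) k) i s) i
      ≤ payoff r (fun k _ => pairRates i j π (π ^ 2) k) i + 3 * π := by
  obtain ⟨hp, hq⟩ := mem_Icc_and_sq_mem_Icc hπ0 hπ
  have ha := pairRates_mem_Icc (i := i) (j := j) hp hq
  have hσ : stageExpectation (update (pairRates i j π (π ^ 2)) i 0) 1 = π ^ 2 := by
    rw [update_pairRates_left, stageExpectation_pairRates_one hij]
    ring
  have hβ : stageExpectation (update (pairRates i j π (π ^ 2)) i 0) (fun S => r S i)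
      = π ^ 2 * r {j} i := by
    rw [update_pairRates_left, stageExpectation_pairRates hij]
    ring
  have hX := stageExpectation_pairRates_ge hij hp hq fun S => (hr S i).1
  rw [hdiag, mul_zero, zero_sub] at hX
  have hD := stageExpectation_pairRates_sq_one (π := π) hij
  have hdev := payoff_update_le r (fun S => hr S i) (hdiag i) ha hs (by rw [hσ]; positivity)
  rw [hσ, hβ, max_eq_right (by nlinarith), zero_div, zero_add] at hdev
  rw [payoff_stationary r (fun S => hr S i) ha (hD ▸ by nlinarith), hD]
  have hstat : -π ≤ (stageExpectation (pairRates i j π (π ^ 2)) fun S => r S i)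
      / (π + π ^ 2 - π ^ 3) := by
    rw [le_div_iff₀ (by nlinarith)]
    nlinarith [mul_nonneg (pow_nonneg hπ0.le 3) (by linarith : (0 : ℝ) ≤ 1 - π)]
  nlinarith

lemma payoff_update_pairRates_right_le (hr : ∀ S k, r S k ∈ Set.Icc (-1 : ℝ) 1)
    (hdiag : ∀ k, r {k} k = 0) (hij : i ≠ j) (hpos : ∀ k, 0 ≤ r {i} k) (hπ0 : 0 < π)
    (hπ : π ≤ 1 / 3) (hs : ∀ t, s t ∈ Set.Icc (0 : ℝ) 1) :
    payoff r (update (fun k _ => pairRates i j π (π ^ 2) k) j s) j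
      ≤ payoff r (fun k _ => pairRates i j π (π ^ 2) k) j + 3 * π := by
  obtain ⟨hp, hq⟩ := mem_Icc_and_sq_mem_Icc hπ0 hπ
  have ha := pairRates_mem_Icc (i := i) (j := j) hp hq
  have hσ : stageExpectation (update (pairRates i j π (π ^ 2)) j 0) 1 = π := by
    rw [update_pairRates_right hij, stageExpectation_pairRates_one hij]
    ring
  have hβ : stageExpectation (update (pairRates i j π (π ^ 2)) j 0) (fun S => r S j)
      = π * r {i} j := by
    rw [update_pairRates_right hij, stageExpectation_pairRates hij]
    ring
  have hX := stageExpectation_pairRates_ge hij hp hq fun S => (hr S j).1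
  have hD := stageExpectation_pairRates_sq_one (π := π) hij
  have hdev := payoff_update_le r (fun S => hr S j) (hdiag j) ha hs (by rw [hσ]; positivity)
  rw [hσ, hβ, max_eq_left (mul_nonneg hπ0.le (hpos j)), mul_div_cancel_left₀ _ hπ0.ne'] at hdev
  rw [payoff_stationary r (fun S => hr S j) ha (hD ▸ by nlinarith), hD]
  have hstat : r {i} j - 2 * π ≤ (stageExpectation (pairRates i j π (π ^ 2)) fun S => r S j)
      / (π + π ^ 2 - π ^ 3) := by
    rw [le_div_iff₀ (by nlinarith)]
    nlinarith [mul_nonneg (sq_nonneg π)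
      (by nlinarith [(hr {i} j).2] : (0 : ℝ) ≤ 1 - r {i} j + 2 * π - 2 * π ^ 2)]
  linarith

lemma payoff_update_pairRates_le {m : Fin N} (hr : ∀ S k, r S k ∈ Set.Icc (-1 : ℝ) 1)
    (hdiag : ∀ k, r {k} k = 0) (hij : i ≠ j) (hmi : m ≠ i) (hmj : m ≠ j)
    (hpos : ∀ k, 0 ≤ r {i} k) (hπ0 : 0 < π) (hπ : π ≤ 1 / 3) (hs : ∀ t, s t ∈ Set.Icc (0 : ℝ) 1) :
    payoff r (update (fun k _ => pairRates i j π (π ^ 2) k) m s) m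
      ≤ payoff r (fun k _ => pairRates i j π (π ^ 2) k) m + 3 * π := by
  obtain ⟨hp, hq⟩ := mem_Icc_and_sq_mem_Icc hπ0 hπ
  have ha := pairRates_mem_Icc (i := i) (j := j) hp hq
  have hX := stageExpectation_pairRates_ge hij hp hq fun S => (hr S m).1
  have hD := stageExpectation_pairRates_sq_one (π := π) hij
  have hDpos : 0 < π + π ^ 2 - π ^ 3 := by nlinarith
  have hdev := payoff_update_le r (fun S => hr S m) (hdiag m) ha hs
    (by rw [update_pairRates_of_ne hmi hmj, hD]; exact hDpos)
  rw [update_pairRates_of_ne hmi hmj, hD] at hdev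
  rw [payoff_stationary r (fun S => hr S m) ha (hD ▸ hDpos), hD]
  set X := stageExpectation (pairRates i j π (π ^ 2)) fun S => r S m
  have hmax : max X 0 / (π + π ^ 2 - π ^ 3) ≤ X / (π + π ^ 2 - π ^ 3) + π := by
    rw [div_add' _ _ _ hDpos.ne', div_le_div_iff_of_pos_right hDpos]
    refine max_le (by nlinarith) ?_
    nlinarith [mul_nonneg (mul_nonneg hp.1 (sub_nonneg.2 hq.2)) (hpos m),
      mul_nonneg (pow_nonneg hπ0.le 3) (by linarith : (0 : ℝ) ≤ 1 - π)]
  nlinarith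

lemma isEpsEquilibrium_pairRates (hr : ∀ S k, r S k ∈ Set.Icc (-1 : ℝ) 1)
    (hdiag : ∀ k, r {k} k = 0) (hij : i ≠ j) (hrji : r {j} i ≤ 0) (hpos : ∀ k, 0 ≤ r {i} k)
    (hπ0 : 0 < π) (hπ : π ≤ 1 / 3) :
    IsEpsEquilibrium r (fun k _ => pairRates i j π (π ^ 2) k) (3 * π) := by
  obtain ⟨hp, hq⟩ := mem_Icc_and_sq_mem_Icc hπ0 hπ
  refine ⟨fun k _ => pairRates_mem_Icc hp hq k, fun m s hs => ?_⟩
  rcases eq_or_ne m i with rfl | hmi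
  · linarith [payoff_update_pairRates_left_le r hr hdiag hij hrji hπ0 hπ hs]
  rcases eq_or_ne m j with rfl | hmj
  · linarith [payoff_update_pairRates_right_le r hr hdiag hij hpos hπ0 hπ hs]
  · linarith [payoff_update_pairRates_le r hr hdiag hij hmi hmj hpos hπ0 hπ hs]

end Equilibrium

lemma IsEpsEquilibrium.mono {r : Finset (Fin N) → Fin N → ℝ} {x : Fin N → ℕ → ℝ} {ε ε' : ℝ}
    (h : IsEpsEquilibrium r x ε) (hε : ε ≤ ε') : IsEpsEquilibrium r x ε' :=
  ⟨h.1, fun m x' hx' => (h.2 m x' hx').trans' (by linarith)⟩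

end QuittingGame

open QuittingGame

theorem quitting_game_stationary_equilibrium_of_normal_nonneg_general
    (N : ℕ)
    (r : Finset (Fin N) → Fin N → ℝ)
    (hr : ∀ S i, r S i ∈ Set.Icc (-1 : ℝ) 1)
    (hdiag : ∀ i : Fin N, r {i} i = 0)
    (i : Fin N) (hi : i ∈ normalPlayers r)
    (hpos : ∀ j : Fin N, 0 ≤ r {i} j)
    (ε : ℝ) (hε : 0 < ε) :
    ∃ x : Fin N → ℕ → ℝ, (∀ i t, x i t = x i 0) ∧ IsEpsEquilibrium r x ε := by
  obtain ⟨-, j, -, hji, hrji⟩ : i ∈ normalLevel r 1 := Set.mem_iInter.1 hi 1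
  obtain ⟨π, hπ0, hπ, hπε⟩ : ∃ π : ℝ, 0 < π ∧ π ≤ 1 / 3 ∧ 3 * π ≤ ε :=
    ⟨min ε 1 / 3, by positivity, by linarith [min_le_right ε 1], by linarith [min_le_left ε 1]⟩
  exact ⟨fun k _ => pairRates i j π (π ^ 2) k, fun _ _ => rfl,
    (isEpsEquilibrium_pairRates r hr hdiag hji.symm hrji hpos hπ0 hπ).mono hπε⟩

/-- **If there is a normal player `i` whose quitting-alone payoff vector `r^i` is
nonnegative in every coordinate, then the quitting game admits a stationary
`ε`-equilibrium, for every `ε > 0`.** -/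
theorem quitting_game_stationary_equilibrium_of_normal_nonneg
    (N : ℕ) (hN : 1 ≤ N)
    (r : Finset (Fin N) → Fin N → ℝ)
    (hr : ∀ S i, r S i ∈ Set.Icc (-1 : ℝ) 1)
    (hdiag : ∀ i : Fin N, r {i} i = 0)
    (i : Fin N) (hi : i ∈ normalPlayers r)
    (hpos : ∀ j : Fin N, 0 ≤ r {i} j)
    (ε : ℝ) (hε : 0 < ε) :
    ∃ x : Fin N → ℕ → ℝ, (∀ i t, x i t = x i 0) ∧ IsEpsEquilibrium r x ε :=
  quitting_game_stationary_equilibrium_of_normal_nonneg_general N r hr hdiag i hi hpos ε hε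
end
end

section
/- Let (X,d) be a nonempty complete metric space and let f : X → X be a function that has no fixed point. Then for every C ≥ 0 and every c > 0 there exist K ∈ ℕ with K ≥ 1 and points x^1, x^2, …, x^K ∈ X such that (A.1) ∑_{k=1}^K d(x^k, f(x^k)) > C, and (A.2) ∑_{k=1}^{K−1} d(x^{k+1}, f(x^k)) < c. -/
/-!
Suppose the conclusion fails for `C` and `c`. Cutting a chain `x⁰, x¹, …` wherever its jumps
`∑ d(xᵏ⁺¹, f xᵏ)` accumulate to `c` shows that its displacement `∑ d(xᵏ, f xᵏ)` is at most
`C + (C / c) · jumps`. Hence the potential `φ x`, the supremum over chains from `x` of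
`displacement - (C / c) · jumps`, is finite, and prepending `x` to chains from `y` gives
`φ y + d(x, f x) ≤ φ x + (C / c) · d(y, f x)`.

For `y = f x` this is Caristi's condition `φ (f x) + d(x, f x) ≤ φ x`. The potential need not
be lower semicontinuous, but the same inequality makes it lower semicontinuous along sequences
with `d(uₙ, f uₙ) → 0`, and this is all that Caristi's argument (a sequence descending along
`φ y + d(x, y) ≤ φ x` and almost minimizing `φ` at each step) uses. So `f` has a fixed point.
-/

open Finset Filter Topology

section Chains

variable {X : Type*} [PseudoMetricSpace X] (f : X → X)

/-- `n` counts the jumps: the chain consists of the `n + 1` points `p 0, …, p n`. -/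
def displacementSum (n : ℕ) (p : ℕ → X) : ℝ :=
  ∑ k ∈ range (n + 1), dist (p k) (f (p k))

def jumpSum (n : ℕ) (p : ℕ → X) : ℝ :=
  ∑ k ∈ range n, dist (p (k + 1)) (f (p k))

theorem jumpSum_nonneg (n : ℕ) (p : ℕ → X) : 0 ≤ jumpSum f n p :=
  sum_nonneg fun _ _ => dist_nonneg

theorem displacementSum_succ (n : ℕ) (p : ℕ → X) :
    displacementSum f (n + 1) p =
      dist (p 0) (f (p 0)) + displacementSum f n (fun k => p (k + 1)) := by
  rw [displacementSum, sum_range_succ', add_comm]; rfl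

theorem jumpSum_succ (n : ℕ) (p : ℕ → X) :
    jumpSum f (n + 1) p = dist (p 1) (f (p 0)) + jumpSum f n (fun k => p (k + 1)) := by
  rw [jumpSum, sum_range_succ', add_comm]; rfl

theorem displacementSum_add (m r : ℕ) (p : ℕ → X) :
    displacementSum f (m + 1 + r) p =
      displacementSum f m p + displacementSum f r (fun k => p (m + 1 + k)) := by
  rw [displacementSum, show m + 1 + r + 1 = m + 1 + (r + 1) by ring, sum_range_add]; rfl

theorem jumpSum_add (m r : ℕ) (p : ℕ → X) :
    jumpSum f (m + r) p = jumpSum f m p + jumpSum f r (fun k => p (m + k)) := by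
  rw [jumpSum, sum_range_add]; rfl

/-- Cut the chain right after the first point at which its jumps add up to `c`: the piece
before has jumps `< c`, hence displacement `≤ C`, and each cut costs at least `c` of jumps. -/
theorem displacementSum_le_of_jumpSum_lt {C c : ℝ} (hC : 0 ≤ C) (hc : 0 < c)
    (H : ∀ n p, jumpSum f n p < c → displacementSum f n p ≤ C) (n : ℕ) (p : ℕ → X) :
    displacementSum f n p ≤ C + C / c * jumpSum f n p := by
  induction n using Nat.strong_induction_on generalizing p with
  | _ n ih =>
  have hCc : 0 ≤ C / c := div_nonneg hC hc.le
  by_cases hlt : jumpSum f n p < c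
  · linarith [H n p hlt, mul_nonneg hCc (jumpSum_nonneg f n p)]
  have hex : ∃ m, c ≤ jumpSum f m p := ⟨n, not_lt.1 hlt⟩
  obtain ⟨j, hj⟩ : ∃ j, Nat.find hex = j + 1 :=
    Nat.exists_eq_succ_of_ne_zero fun h0 =>
      (Nat.find_spec hex).not_gt (by rw [h0]; simpa [jumpSum] using hc)
  have hcross : c ≤ jumpSum f (j + 1) p := hj ▸ Nat.find_spec hex
  have hbefore : jumpSum f j p < c := not_le.1 (Nat.find_min hex (by omega))
  obtain ⟨r, rfl⟩ := Nat.exists_eq_add_of_le (hj ▸ Nat.find_min' hex (not_lt.1 hlt))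
  have hrest := ih r (by omega) (fun k => p (j + 1 + k))
  have hcut : C ≤ C / c * jumpSum f (j + 1) p := by
    rw [div_mul_eq_mul_div, le_div_iff₀ hc]
    exact mul_le_mul_of_nonneg_left hcross hC
  rw [displacementSum_add, jumpSum_add, mul_add]
  linarith [H j p hbefore]

noncomputable def chainPotential (lam : ℝ) (x : X) : ℝ :=
  sSup {v | ∃ n p, p 0 = x ∧ displacementSum f n p - lam * jumpSum f n p = v}

variable {f} {lam C : ℝ}

theorem le_chainPotential {n : ℕ} {p : ℕ → X}
    (hB : ∀ n p, displacementSum f n p ≤ C + lam * jumpSum f n p) :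
    displacementSum f n p - lam * jumpSum f n p ≤ chainPotential f lam (p 0) := by
  refine le_csSup ⟨C, ?_⟩ ⟨n, p, rfl, rfl⟩
  rintro _ ⟨n, p, -, rfl⟩
  linarith [hB n p]

theorem dist_le_chainPotential
    (hB : ∀ n p, displacementSum f n p ≤ C + lam * jumpSum f n p) (x : X) :
    dist x (f x) ≤ chainPotential f lam x := by
  simpa [displacementSum, jumpSum] using le_chainPotential hB (n := 0) (p := fun _ => x)

/-- Prepending `x` to a chain starting at `y` adds `dist x (f x)` to its displacement and
`dist y (f x)` to its jumps. -/
theorem chainPotential_add_dist_le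
    (hB : ∀ n p, displacementSum f n p ≤ C + lam * jumpSum f n p) (x y : X) :
    chainPotential f lam y + dist x (f x) ≤ chainPotential f lam x + lam * dist y (f x) := by
  rw [← le_sub_iff_add_le, add_sub_right_comm]
  refine csSup_le ⟨_, 0, fun _ => y, rfl, rfl⟩ ?_
  rintro _ ⟨n, p, rfl, rfl⟩
  have := le_chainPotential hB (n := n + 1) (p := fun | 0 => x | k + 1 => p k)
  rw [displacementSum_succ, jumpSum_succ] at this
  linarith

end Chains

section Caristi

variable {X : Type*}

theorem exists_seq_almost_minimizing [PseudoMetricSpace X] [Nonempty X] {φ : X → ℝ}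
    (hφ : BddBelow (Set.range φ)) {ε : ℕ → ℝ} (hε : ∀ n, 0 < ε n) :
    ∃ u : ℕ → X, ∀ n, φ (u (n + 1)) + dist (u n) (u (n + 1)) ≤ φ (u n) ∧
      ∀ y, φ y + dist (u n) y ≤ φ (u n) → φ (u (n + 1)) ≤ φ y + ε n := by
  have step : ∀ n x, ∃ y, φ y + dist x y ≤ φ x ∧
      ∀ z, φ z + dist x z ≤ φ x → φ y ≤ φ z + ε n := by
    intro n x
    let below := {y | φ y + dist x y ≤ φ x}
    obtain ⟨_, ⟨y, hy, rfl⟩, hlt⟩ :=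
      Real.lt_sInf_add_pos (s := φ '' below) ⟨φ x, x, by simp [below], rfl⟩ (hε n)
    refine ⟨y, hy, fun z hz => ?_⟩
    linarith [csInf_le (hφ.mono (Set.image_subset_range φ below)) ⟨z, hz, rfl⟩]
  choose g hg using step
  exact ⟨fun n => Nat.rec (Classical.arbitrary X) g n, fun n => hg n _⟩

theorem exists_tendsto_of_add_dist_succ_le [PseudoMetricSpace X] [CompleteSpace X]
    {φ : X → ℝ} (hφ : BddBelow (Set.range φ)) {u : ℕ → X}
    (hu : ∀ n, φ (u (n + 1)) + dist (u n) (u (n + 1)) ≤ φ (u n)) :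
    ∃ w L, Tendsto u atTop (𝓝 w) ∧ Tendsto (φ ∘ u) atTop (𝓝 L) ∧
      ∀ n, L + dist (u n) w ≤ φ (u n) := by
  have hmono : ∀ n m, n ≤ m → φ (u m) + dist (u n) (u m) ≤ φ (u n) := by
    intro n m hnm
    induction m, hnm using Nat.le_induction with
    | base => simp
    | succ m _ ih => linarith [hu m, dist_triangle (u n) (u m) (u (m + 1))]
  have hanti : Antitone (φ ∘ u) :=
    antitone_nat_of_succ_le fun n => show φ (u (n + 1)) ≤ φ (u n) by
      linarith [hu n, dist_nonneg (x := u n) (y := u (n + 1))]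
  have hL := tendsto_atTop_ciInf hanti (hφ.mono (Set.range_comp_subset_range u φ))
  set L := ⨅ n, (φ ∘ u) n
  have hLle : ∀ n, L ≤ φ (u n) := hanti.le_of_tendsto hL
  have hcauchy : CauchySeq u := by
    refine cauchySeq_of_le_tendsto_0 (fun N => 2 * (φ (u N) - L)) (fun n m N hn hm => ?_) ?_
    · linarith [hmono N n hn, hmono N m hm, hLle n, hLle m, dist_triangle_left (u n) (u m) (u N)]
    · simpa using (hL.sub_const L).const_mul 2
  obtain ⟨w, hw⟩ := cauchySeq_tendsto_of_complete hcauchy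
  refine ⟨w, L, hw, hL, fun n => ?_⟩
  have hdist : Tendsto (fun m => dist (u n) (u m)) atTop (𝓝 (dist (u n) w)) :=
    tendsto_const_nhds.dist hw
  have := le_of_tendsto hdist <| eventually_atTop.2
    ⟨n, fun m hm => show dist (u n) (u m) ≤ φ (u n) - L by linarith [hmono n m hm, hLle m]⟩
  linarith

theorem exists_isFixedPt_of_caristi [MetricSpace X] [CompleteSpace X] [Nonempty X]
    {f : X → X} {φ : X → ℝ} (hφ : BddBelow (Set.range φ))
    (hf : ∀ x, φ (f x) + dist x (f x) ≤ φ x)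
    (hlsc : ∀ (u : ℕ → X) w L, Tendsto u atTop (𝓝 w) →
      Tendsto (fun n => dist (u n) (f (u n))) atTop (𝓝 0) → Tendsto (φ ∘ u) atTop (𝓝 L) →
      φ w ≤ L) :
    ∃ w, Function.IsFixedPt f w := by
  obtain ⟨u, hu⟩ := exists_seq_almost_minimizing hφ (ε := fun n => 1 / ((n : ℝ) + 1))
    fun n => by positivity
  obtain ⟨w, L, hw, hL, hLw⟩ := exists_tendsto_of_add_dist_succ_le hφ fun n => (hu n).1
  have hε : Tendsto (fun n : ℕ => 1 / ((n : ℝ) + 1)) atTop (𝓝 0) :=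
    tendsto_one_div_add_atTop_nhds_zero_nat
  have hL' : Tendsto (fun n => φ (u (n + 1))) atTop (𝓝 L) := hL.comp (tendsto_add_atTop_nat 1)
  -- `f (u n)` lies below `u n`, so it competes with `u (n + 1)`.
  have hdisp : Tendsto (fun n => dist (u n) (f (u n))) atTop (𝓝 0) := by
    have hbound : ∀ n, dist (u n) (f (u n)) ≤ φ (u n) - φ (u (n + 1)) + 1 / ((n : ℝ) + 1) :=
      fun n => by linarith [(hu n).2 _ (hf (u n)), hf (u n)]
    refine squeeze_zero (fun _ => dist_nonneg) hbound ?_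
    simpa using (hL.sub hL').add hε
  have hφw : φ w ≤ L := hlsc u w L hw hdisp hL
  -- `w`, and hence `f w`, lies below every `u n`.
  have hfw : ∀ n, φ (u (n + 1)) ≤ φ (f w) + 1 / ((n : ℝ) + 1) := fun n =>
    (hu n).2 _ (by linarith [hLw n, hf w, dist_triangle (u n) w (f w)])
  have hLfw : L ≤ φ (f w) :=
    le_of_tendsto_of_tendsto' hL' (by simpa using tendsto_const_nhds.add hε) hfw
  exact ⟨w, (dist_le_zero.1 (by linarith [hf w])).symm⟩

theorem le_of_tendsto_of_add_dist_le [PseudoMetricSpace X] {f : X → X} {φ : X → ℝ} {lam : ℝ}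
    (hφ : ∀ x y, φ y + dist x (f x) ≤ φ x + lam * dist y (f x)) {u : ℕ → X} {w : X} {L : ℝ}
    (hw : Tendsto u atTop (𝓝 w)) (hdisp : Tendsto (fun n => dist (u n) (f (u n))) atTop (𝓝 0))
    (hL : Tendsto (φ ∘ u) atTop (𝓝 L)) : φ w ≤ L := by
  have hjump : Tendsto (fun n => dist w (f (u n))) atTop (𝓝 0) := by
    refine squeeze_zero (fun _ => dist_nonneg) (fun n => dist_triangle w (u n) (f (u n))) ?_
    simpa [dist_comm] using (tendsto_iff_dist_tendsto_zero.1 hw).add hdisp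
  refine ge_of_tendsto' (by simpa using (hL.add (hjump.const_mul lam)).sub hdisp) fun n => ?_
  linarith [hφ (u n) w]

end Caristi

/-- **Approximation theorem: if `f : X → X` has no fixed point on a nonempty complete
metric space `X`, then for every `C ≥ 0` and `c > 0` there are `K ≥ 1` and points
`x^1,…,x^K` such that `∑_{k=1}^K d(x^k, f(x^k)) > C` and
`∑_{k=1}^{K-1} d(x^{k+1}, f(x^k)) < c`.** -/
theorem exists_approximate_orbit {X : Type*} [MetricSpace X] [CompleteSpace X]
    [Nonempty X] (f : X → X) (hf : ∀ x : X, f x ≠ x)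
    (C c : ℝ) (hC : 0 ≤ C) (hc : 0 < c) :
    ∃ (K : ℕ) (x : ℕ → X), 1 ≤ K ∧
      (C < ∑ k ∈ Finset.range K, dist (x k) (f (x k))) ∧
      (∑ k ∈ Finset.range (K - 1), dist (x (k + 1)) (f (x k)) < c) := by
  by_contra! hcon
  have hshort : ∀ n p, jumpSum f n p < c → displacementSum f n p ≤ C := fun n p hjump =>
    le_of_not_gt fun hdisp => (hcon (n + 1) p (by omega) hdisp).not_gt hjump
  have hB := displacementSum_le_of_jumpSum_lt f hC hc hshort
  have hkey := chainPotential_add_dist_le hB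
  obtain ⟨w, hw⟩ := exists_isFixedPt_of_caristi
    ⟨0, by rintro _ ⟨x, rfl⟩; exact dist_nonneg.trans (dist_le_chainPotential hB x)⟩
    (fun x => by simpa using hkey x (f x))
    (fun _ _ _ => le_of_tendsto_of_add_dist_le hkey)
  exact hf w hw
end

section
/- Let R be an invertible n×n real matrix whose inverse R^{−1} has all entries nonnegative, and let r^1,…,r^n denote the columns of R. For each i ∈ {1,…,n} let w^i := e^i / ‖R^{−1}e^i‖_1, where e^i is the i-th standard basis vector of ℝ^n and ‖·‖_1 is the ℓ^1-norm. Then w^i ∈ D := conv(r^1,…,r^n) ∩ ℝ^n_{≥0} for every i, and D = conv(w^1,…,w^n). -/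
/-!
Let `s := 1ᵀ R⁻¹` be the vector of column sums of `R⁻¹`; `‖R⁻¹ eⁱ‖₁ = sᵢ > 0`. A point `x` lies in
the convex hull of the columns of `R` iff its barycentric coordinates `R⁻¹ x` are nonnegative and
sum to `1`, i.e. `R⁻¹ x ≥ 0` and `s ⬝ x = 1`. As `R⁻¹ ≥ 0`, the first condition is implied by
`x ≥ 0`, so `D = {x ≥ 0 | s ⬝ x = 1}`: the simplex whose vertices are `eⁱ / sᵢ = wⁱ`.
-/

open Set

namespace Matrix

section OrderedSemiring

variable {R ι : Type*} [Semiring R] [PartialOrder R] [IsOrderedRing R] [Nontrivial R]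
  [Fintype ι] [DecidableEq ι]

theorem one_vecMul_pos_of_nonneg {A B : Matrix ι ι R} (hB : ∀ i j, 0 ≤ B i j)
    (hAB : A * B = 1) (j : ι) : 0 < (1 ᵥ* B) j := by
  have hsum : (1 ᵥ* B) j = ∑ i, B i j := by simp [vecMul, dotProduct]
  refine hsum ▸ (Finset.sum_nonneg fun i _ => hB i j).lt_of_ne fun h => ?_
  have hcol : ∀ i, B i j = 0 := fun i =>
    (Finset.sum_eq_zero_iff_of_nonneg fun i _ => hB i j).mp h.symm i (Finset.mem_univ i)
  simpa [mul_apply, hcol] using congr_fun (congr_fun hAB j) j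

end OrderedSemiring

variable {𝕜 ι : Type*} [Field 𝕜] [LinearOrder 𝕜] [IsStrictOrderedRing 𝕜] [Fintype ι]
  [DecidableEq ι]

theorem convexHull_range_col_eq_preimage_stdSimplex {A B : Matrix ι ι 𝕜} (hBA : B * A = 1) :
    convexHull 𝕜 (range A.col) = (B *ᵥ ·) ⁻¹' stdSimplex 𝕜 ι := by
  have hcol : A.col = A.mulVecLin ∘ fun i => Pi.single i 1 := by
    ext i j; simp
  rw [hcol, range_comp, ← LinearMap.image_convexHull, convexHull_rangle_single_eq_stdSimplex]
  ext x
  constructor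
  · rintro ⟨t, ht, rfl⟩
    simpa [mulVec_mulVec, hBA] using ht
  · intro hx
    refine ⟨B *ᵥ x, hx, ?_⟩
    simp [mulVec_mulVec, mul_eq_one_comm.mp hBA]

theorem mem_convexHull_range_col_iff {A B : Matrix ι ι 𝕜} (hBA : B * A = 1) {x : ι → 𝕜} :
    x ∈ convexHull 𝕜 (range A.col) ↔ (∀ i, 0 ≤ (B *ᵥ x) i) ∧ (1 ᵥ* B) ⬝ᵥ x = 1 := by
  rw [convexHull_range_col_eq_preimage_stdSimplex hBA, mem_preimage, stdSimplex, mem_ofPred_eq,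
    ← one_dotProduct, dotProduct_mulVec]

theorem convexHull_range_col_inter_nonneg {A B : Matrix ι ι 𝕜} (hBA : B * A = 1)
    (hB : ∀ i j, 0 ≤ B i j) :
    convexHull 𝕜 (range A.col) ∩ {x | ∀ i, 0 ≤ x i} =
      {x | (∀ i, 0 ≤ x i) ∧ (1 ᵥ* B) ⬝ᵥ x = 1} := by
  ext x
  simp only [mem_inter_iff, mem_convexHull_range_col_iff hBA, mem_ofPred_eq]
  constructor
  · rintro ⟨⟨-, hsum⟩, hx⟩
    exact ⟨hx, hsum⟩
  · rintro ⟨hx, hsum⟩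
    exact ⟨⟨fun i => Finset.sum_nonneg fun j _ => mul_nonneg (hB i j) (hx j), hsum⟩, hx⟩

theorem convexHull_range_inv_smul_single {s : ι → 𝕜} (hs : ∀ i, 0 < s i) :
    convexHull 𝕜 (range fun i => (s i)⁻¹ • (Pi.single i 1 : ι → 𝕜)) =
      {x | (∀ i, 0 ≤ x i) ∧ s ⬝ᵥ x = 1} := by
  have hcol : (fun i => (s i)⁻¹ • (Pi.single i 1 : ι → 𝕜)) = (diagonal s⁻¹).col := by
    funext i
    rw [col_diagonal, Pi.inv_apply, ← Pi.single_smul, smul_eq_mul, mul_one]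
  have hBA : diagonal s * diagonal s⁻¹ = 1 := by
    rw [diagonal_mul_diagonal, ← diagonal_one]
    exact congr_arg diagonal (funext fun i => mul_inv_cancel₀ (hs i).ne')
  have hsum : 1 ᵥ* diagonal s = s := funext fun i => by simp [vecMul_diagonal]
  ext x
  rw [hcol, mem_convexHull_range_col_iff hBA, hsum]
  simp [mulVec_diagonal, mul_nonneg_iff_of_pos_left (hs _)]

end Matrix

open Matrix in
/-- **If `R` is an invertible matrix whose inverse is (entrywise) nonnegative, and
`w^i := e^i / ‖R⁻¹ e^i‖₁`, then each `w^i` lies in `D := conv(r^1,…,r^n) ∩ ℝ^n_{≥0}`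
(where `r^1,…,r^n` are the columns of `R`) and `D = conv(w^1,…,w^n)`.** -/
theorem inverse_positive_matrix_Dset_eq (n : ℕ) (R : Matrix (Fin n) (Fin n) ℝ)
    (hdet : IsUnit R.det) (hinv : ∀ i j, 0 ≤ R⁻¹ i j) :
    ∀ w : Fin n → Fin n → ℝ,
      (w = fun i => (∑ j, |R⁻¹.mulVec (Pi.single i 1) j|)⁻¹ • (Pi.single i 1 : Fin n → ℝ)) →
      ∀ D : Set (Fin n → ℝ),
        (D = convexHull ℝ (Set.range R.transpose) ∩ {x | ∀ i, 0 ≤ x i}) →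
        (∀ i, w i ∈ D) ∧ D = convexHull ℝ (Set.range w) := by
  rintro w rfl D rfl
  have hs : ∀ i, 0 < (1 ᵥ* R⁻¹) i :=
    one_vecMul_pos_of_nonneg hinv (mul_nonsing_inv R hdet)
  have hnorm : ∀ i, ∑ j, |(R⁻¹ *ᵥ Pi.single i 1) j| = (1 ᵥ* R⁻¹) i := fun i => by
    simp [vecMul, dotProduct, abs_of_nonneg (hinv _ i)]
  have hD : convexHull ℝ (range R.col) ∩ {x | ∀ i, 0 ≤ x i} =
      convexHull ℝ (range fun i => ((1 ᵥ* R⁻¹) i)⁻¹ • (Pi.single i 1 : Fin n → ℝ)) := by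
    rw [convexHull_range_col_inter_nonneg (nonsing_inv_mul R hdet) hinv,
      convexHull_range_inv_smul_single hs]
  simp only [hnorm]
  exact ⟨fun i => hD ▸ subset_convexHull ℝ _ ⟨i, rfl⟩, hD⟩
end

section
/- Let R be an invertible n×n real matrix with zero diagonal, with exactly one positive entry in each row and each column, and whose inverse R^{−1} has all entries nonnegative. Let r^1,…,r^n denote the columns of R, let D := conv(r^1,…,r^n) ∩ ℝ^n_{≥0}, and for each i let w^i := e^i / ‖R^{−1}e^i‖_1 and let j_i be the unique index j with r^j_i > 0. Then for each i ∈ {1,…,n} there exist α ∈ (0,1) and y ∈ D such that w^i = α r^{j_i} + (1−α) y. -/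
/-!
Since `R (R⁻¹ e^i) = e^i`, the vector `w^i` is the convex combination of the columns `r^j` with
weights `R⁻¹_{j i} / s`, where `s = ‖R⁻¹ e^i‖₁`. Row `i` of `R R⁻¹ = 1`, whose only positive
term is `R_{i j_i} R⁻¹_{j_i i}`, gives `R_{i j_i} R⁻¹_{j_i i} ≥ 1`, so the part
`β r^{j_i}` with `β = 1 / (2 R_{i j_i})` can be split off while keeping the remaining weights
nonnegative. The remainder `e^i - β r^{j_i}` is nonnegative: column `j_i` is nonpositive off
row `i`, and its entry in row `i` becomes `1 / 2`.
-/

open Finset Matrix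

theorem nonpos_of_existsUnique_pos {ι α : Type*} [Zero α] [LinearOrder α] {f : ι → α}
    (h : ∃! j, 0 < f j) {j₀ j : ι} (h₀ : 0 < f j₀) (hj : j ≠ j₀) : f j ≤ 0 :=
  not_lt.1 fun hpos => hj (h.unique hpos h₀)

theorem Finset.sum_le_of_nonpos_of_ne {ι M : Type*} [Fintype ι] [AddCommMonoid M]
    [PartialOrder M] [IsOrderedAddMonoid M] {f : ι → M} {j₀ : ι} (hf : ∀ j ≠ j₀, f j ≤ 0) :
    ∑ j, f j ≤ f j₀ := by
  classical
  rw [← add_sum_erase _ _ (mem_univ j₀)]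
  exact add_le_of_nonpos_right (sum_nonpos fun j hj => hf j (ne_of_mem_erase hj))

theorem inv_smul_sub_smul_mem_convexHull {𝕜 E ι : Type*} [Field 𝕜] [LinearOrder 𝕜]
    [IsStrictOrderedRing 𝕜] [AddCommGroup E] [Module 𝕜 E] [Fintype ι]
    (v : ι → E) {x : ι → 𝕜} (hx : ∀ j, 0 ≤ x j) {j₀ : ι} {β : 𝕜}
    (hβ : β ≤ x j₀) (hβs : β < ∑ j, x j) :
    (∑ j, x j - β)⁻¹ • (∑ j, x j • v j - β • v j₀) ∈ convexHull 𝕜 (Set.range v) := by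
  classical
  set w : ι → 𝕜 := x - Pi.single j₀ β
  have hw : ∀ j ∈ univ, 0 ≤ w j := fun j _ => by
    by_cases h : j = j₀
    · subst h; simpa [w] using hβ
    · simpa [w, h] using hx j
  have hws : 0 < ∑ j, w j := by simpa [w, sum_sub_distrib] using hβs
  convert univ.centerMass_mem_convexHull hw hws fun j _ => Set.mem_range_self (f := v) j using 1
  simp [w, centerMass, sub_smul, sum_sub_distrib, Pi.single_apply, ite_smul]

theorem inv_smul_eq_div_smul_add {𝕜 E : Type*} [Field 𝕜] [AddCommGroup E] [Module 𝕜 E]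
    {s β : 𝕜} (hs : s ≠ 0) (hβs : β ≠ s) (u v : E) :
    s⁻¹ • u = (β / s) • v + (1 - β / s) • ((s - β)⁻¹ • (u - β • v)) := by
  have : s - β ≠ 0 := sub_ne_zero.2 hβs.symm
  match_scalars
  · field_simp
  · field_simp; ring

theorem Matrix.sum_inv_apply_smul_transpose {n : Type*} [Fintype n] [DecidableEq n]
    {R : Matrix n n ℝ} (hdet : IsUnit R.det) (i : n) :
    ∑ j, R⁻¹ j i • Rᵀ j = Pi.single i 1 := by
  ext k
  simpa [sum_apply, mul_comm, ← mul_apply, one_apply, Pi.single_apply, eq_comm] using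
    congr_fun₂ (R.mul_nonsing_inv hdet) k i

theorem Matrix.one_le_mul_inv_apply {n : Type*} [Fintype n] [DecidableEq n]
    {R : Matrix n n ℝ} (hdet : IsUnit R.det) {i j₀ : n} (hrow : ∀ j ≠ j₀, R i j ≤ 0)
    (hinv : ∀ j, 0 ≤ R⁻¹ j i) : 1 ≤ R i j₀ * R⁻¹ j₀ i := by
  have h := congr_fun₂ (R.mul_nonsing_inv hdet) i i
  rw [mul_apply, one_apply_eq] at h
  exact h ▸ sum_le_of_nonpos_of_ne fun j hj =>
    mul_nonpos_of_nonpos_of_nonneg (hrow j hj) (hinv j)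

theorem w_decomposition_of_M_matrix_general (n : ℕ) (R : Matrix (Fin n) (Fin n) ℝ)
    (hdet : IsUnit R.det)
    (hrow : ∀ i, ∃! j, 0 < R i j)
    (hcol : ∀ j, ∃! i, 0 < R i j)
    (hinv : ∀ i j, 0 ≤ R⁻¹ i j)
    (i ji : Fin n) (hji : 0 < R i ji) :
    ∃ (α : ℝ) (y : Fin n → ℝ), α ∈ Set.Ioo (0 : ℝ) 1 ∧
      y ∈ convexHull ℝ (Set.range R.transpose) ∩ {x : Fin n → ℝ | ∀ k, 0 ≤ x k} ∧
      (∑ j, |R⁻¹.mulVec (Pi.single i 1) j|)⁻¹ • (Pi.single i 1 : Fin n → ℝ) =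
        α • R.transpose ji + (1 - α) • y := by
  set s := ∑ j, R⁻¹ j i
  have hnorm : ∑ j, |R⁻¹.mulVec (Pi.single i 1) j| = s := by
    simp [s, abs_of_nonneg (hinv _ i)]
  have hkey : 1 ≤ R i ji * R⁻¹ ji i :=
    one_le_mul_inv_apply hdet (fun j => nonpos_of_existsUnique_pos (hrow i) hji) (hinv · i)
  set β := (2 * R i ji)⁻¹
  have hβ : 0 < β := by positivity
  have hβc : β < R⁻¹ ji i := by
    rw [inv_lt_iff_one_lt_mul₀ (by positivity)]
    linarith
  have hβs : β < s := hβc.trans_le (single_le_sum (fun j _ => hinv j i) (mem_univ ji))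
  have hs : 0 < s := hβ.trans hβs
  refine ⟨β / s, (s - β)⁻¹ • (Pi.single i 1 - β • Rᵀ ji),
    ⟨div_pos hβ hs, (div_lt_one hs).2 hβs⟩, ⟨?_, ?_⟩, ?_⟩
  · simpa [sum_inv_apply_smul_transpose hdet] using
      inv_smul_sub_smul_mem_convexHull Rᵀ (hinv · i) hβc.le hβs
  · intro k
    refine mul_nonneg (inv_nonneg.2 (sub_nonneg.2 hβs.le)) (sub_nonneg.2 ?_)
    by_cases hk : k = i
    · subst hk
      have hhalf : β * R k ji = 2⁻¹ := by simp only [β]; field_simp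
      norm_num [hhalf]
    · simpa [Pi.single_apply, hk] using
        mul_nonpos_of_nonneg_of_nonpos hβ.le (nonpos_of_existsUnique_pos (hcol ji) hji hk)
  · rw [hnorm]
    exact inv_smul_eq_div_smul_add hs.ne' hβs.ne _ _

/-- **Let `R` be an invertible matrix with zero diagonal, exactly one positive entry in
each row and each column, and a (entrywise) nonnegative inverse. Let `r^1,…,r^n` be its
columns, `D := conv(r^1,…,r^n) ∩ ℝ^n_{≥0}`, `w^i := e^i / ‖R⁻¹ e^i‖₁`, and let `j_i` be
the unique index `j` with `r^j_i > 0`. Then for each `i` there are `α ∈ (0,1)` and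
`y ∈ D` with `w^i = α r^{j_i} + (1 − α) y`.** -/
theorem w_decomposition_of_M_matrix (n : ℕ) (R : Matrix (Fin n) (Fin n) ℝ)
    (hdet : IsUnit R.det)
    (hdiag : ∀ i, R i i = 0)
    (hrow : ∀ i, ∃! j, 0 < R i j)
    (hcol : ∀ j, ∃! i, 0 < R i j)
    (hinv : ∀ i j, 0 ≤ R⁻¹ i j)
    (i ji : Fin n) (hji : 0 < R i ji) :
    ∃ (α : ℝ) (y : Fin n → ℝ), α ∈ Set.Ioo (0 : ℝ) 1 ∧
      y ∈ convexHull ℝ (Set.range R.transpose) ∩ {x : Fin n → ℝ | ∀ k, 0 ≤ x k} ∧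
      (∑ j, |R⁻¹.mulVec (Pi.single i 1) j|)⁻¹ • (Pi.single i 1 : Fin n → ℝ) =
        α • R.transpose ji + (1 - α) • y :=
  w_decomposition_of_M_matrix_general n R hdet hrow hcol hinv i ji hji
end

section
/- Let r^1,…,r^n ∈ ℝ^n satisfy r^i_i = 0 for every i, and let D := conv(r^1,…,r^n) ∩ ℝ^n_{≥0}. Suppose y ∈ D, w^1,…,w^n ∈ ℝ^n, and z = (z_0,z_1,…,z_n) with z_i ≥ 0 and ∑_{i=0}^n z_i = 1 satisfy: w^i ∈ conv({y, r^i}) \ {y, r^i} for every i; y = z_0 y + ∑_{i=1}^n z_i w^i; w^i_i = 0 whenever z_i > 0; and ∑_{i=1}^n z_i > 0. Then the linear complementarity problem LCP((r^i)_{i=1}^n, 0) has a nontrivial solution (a solution with z_0 < 1). In other words, if LCP((r^i), 0) has no nontrivial solution, then the map y ↦ w provided by the basic building block (with w^i ≠ r^i) has no fixed point on ∂D. -/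
noncomputable section

/-- The set `D := conv(r^1,…,r^n) ∩ ℝ^n_{≥0}`. -/
def Dset (n : ℕ) (r : Fin n → Fin n → ℝ) : Set (Fin n → ℝ) :=
  convexHull ℝ (Set.range r) ∩ {x | ∀ i, 0 ≤ x i}

/-! Writing `w^i = (1 - t_i) y + t_i r^i` with `0 < t_i < 1`, the fixed-point equation becomes
`(∑_i z_i t_i) y = ∑_i z_i t_i r^i`. Since some `z_i > 0`, the weights `z_i t_i` have positive
sum, and normalising them gives a solution `(y, z')` of `LCP((r^i), 0)` with `z'_0 = 0`.
Complementarity holds because `r^i_i = 0` makes `w^i_i = (1 - t_i) y_i`, so `w^i_i = 0` forces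
`y_i = 0`. -/

open Finset AffineMap

theorem exists_mem_Ioo_eq_lineMap_of_mem_segment_diff {𝕜 E : Type*} [Field 𝕜] [LinearOrder 𝕜]
    [IsStrictOrderedRing 𝕜] [AddCommGroup E] [Module 𝕜 E] {x y w : E}
    (hw : w ∈ segment 𝕜 x y \ {x, y}) : ∃ t ∈ Set.Ioo (0 : 𝕜) 1, w = lineMap x y t := by
  have hw' : w ∈ openSegment 𝕜 x y := by
    obtain ⟨hseg, hxy⟩ := hw
    rw [← insert_endpoints_openSegment] at hseg
    simp only [Set.mem_insert_iff, Set.mem_singleton_iff, not_or] at hxy hseg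
    tauto
  rw [openSegment_eq_image_lineMap] at hw'
  obtain ⟨t, ht, rfl⟩ := hw'
  exact ⟨t, ht, rfl⟩

theorem sum_mul_smul_eq_sum_smul_of_eq_combination_lineMap {R E ι : Type*} [CommRing R]
    [AddCommGroup E] [Module R E] (s : Finset ι) (c : R) (z t : ι → R) (y : E) (r : ι → E)
    (hsum : c + ∑ i ∈ s, z i = 1) (hy : y = c • y + ∑ i ∈ s, z i • lineMap y (r i) (t i)) :
    (∑ i ∈ s, z i * t i) • y = ∑ i ∈ s, (z i * t i) • r i := by
  simp only [lineMap_apply_module, smul_add, smul_smul, sum_add_distrib, ← sum_smul, mul_sub,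
    mul_one, sum_sub_distrib] at hy
  linear_combination (norm := module) hy + hsum • y

theorem isLCPSolution_zero_of_smul_eq_sum {n : ℕ} {r : Fin n → Fin n → ℝ} {w μ : Fin n → ℝ}
    (hw : ∀ i, 0 ≤ w i) (hμ : ∀ i, 0 ≤ μ i) (hμpos : 0 < ∑ i, μ i)
    (heq : (∑ i, μ i) • w = ∑ i, μ i • r i) (hcomp : ∀ i, μ i = 0 ∨ w i = 0) :
    IsLCPSolution n r 0 w (Fin.cons 0 fun i ↦ μ i / ∑ j, μ j) := by
  have hμne : ∑ i, μ i ≠ 0 := hμpos.ne'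
  refine ⟨hw, ?_, ?_, ?_, ?_⟩
  · refine Fin.cases le_rfl fun i ↦ ?_
    simpa using div_nonneg (hμ i) hμpos.le
  · simp [Fin.sum_univ_succ, ← sum_div, hμne]
  · intro j
    have hj := congrFun heq j
    simp only [Pi.smul_apply, smul_eq_mul, Finset.sum_apply] at hj
    simp [div_mul_eq_mul_div, ← sum_div, ← hj, hμne]
  · intro i
    simpa [hμne] using hcomp i

/-- **If the basic building block admits a fixed point (there are `y ∈ D`, `w^i` strictly
between `y` and `r^i`, and `z ∈ Δ({0,…,n})` with `y = z_0 y + ∑_i z_i w^i`, `w^i_i = 0`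
whenever `z_i > 0`, and `∑_{i≥1} z_i > 0`), then `LCP((r^i), 0)` has a nontrivial
solution.** -/
theorem lcp_nontrivial_solution_of_fixed_point (n : ℕ) (r : Fin n → Fin n → ℝ)
    (hdiag : ∀ i, r i i = 0)
    (y : Fin n → ℝ) (hy : y ∈ Dset n r)
    (W : Fin n → Fin n → ℝ) (z : Fin (n + 1) → ℝ)
    (hz : ∀ i, 0 ≤ z i) (hzsum : ∑ i, z i = 1)
    (hW : ∀ i, W i ∈ segment ℝ y (r i) \ {y, r i})
    (heq : ∀ j, y j = z 0 * y j + ∑ i : Fin n, z i.succ * W i j)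
    (hcomp : ∀ i : Fin n, 0 < z i.succ → W i i = 0)
    (hpos : 0 < ∑ i : Fin n, z i.succ) :
    ∃ (w' : Fin n → ℝ) (z' : Fin (n + 1) → ℝ),
      IsLCPSolution n r 0 w' z' ∧ z' 0 < 1 := by
  choose t ht hWt using fun i ↦ exists_mem_Ioo_eq_lineMap_of_mem_segment_diff (hW i)
  set μ : Fin n → ℝ := fun i ↦ z i.succ * t i with hμ
  have hμ_nonneg : ∀ i, 0 ≤ μ i := fun i ↦ mul_nonneg (hz _) (ht i).1.le
  have hcone : (∑ i, μ i) • y = ∑ i, μ i • r i := by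
    refine sum_mul_smul_eq_sum_smul_of_eq_combination_lineMap univ (z 0) _ t y r ?_ ?_
    · rw [← hzsum, Fin.sum_univ_succ]
    · ext j
      simpa [← hWt] using heq j
  have hμ_pos : 0 < ∑ i, μ i := by
    obtain ⟨i, -, hi⟩ :=
      exists_lt_of_sum_lt (s := univ) (f := fun _ ↦ (0 : ℝ)) (by simpa using hpos)
    exact sum_pos' (fun i _ ↦ hμ_nonneg i) ⟨i, mem_univ i, mul_pos hi (ht i).1⟩
  have hμ_comp : ∀ i, μ i = 0 ∨ y i = 0 := by
    intro i
    rcases (hz i.succ).eq_or_lt with hzi | hzi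
    · simp [hμ, ← hzi]
    · have hWii : (1 - t i) * y i = 0 := by
        simpa [hWt, lineMap_apply_module, hdiag] using hcomp i hzi
      exact .inr ((mul_eq_zero.mp hWii).resolve_left (sub_ne_zero.mpr (ht i).2.ne'))
  exact ⟨y, _, isLCPSolution_zero_of_smul_eq_sum hy.2 hμ_nonneg hμ_pos hcone hμ_comp, by simp⟩

end
end
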